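/- Let M be a connected open n-manifold, let N ⊆ M be a clean neighborhood of infinity, let C = M ∖ int(N), and let m > 0. If M is finitely dominated, then the subspace K = (M × {m}) ∪ (∂C × [−m,m]) ∪ (C × {−m}) of M × ℝ is finitely dominated, where ∂C denotes the topological frontier of C in M. -/

import Mathlib

open scoped unitInterval
open CategoryTheory

noncomputable section

/-- `M` is an open `n`-manifold: a noncompact, Hausdorff, second-countable space in which
every point has an open neighborhood homeomorphic to `ℝⁿ`. -/
def IsOpenNManifold (n : ℕ) (M : Type) [TopologicalSpace M] : Prop :=
  T2Space M ∧ SecondCountableTopology M ∧ ¬ CompactSpace M ∧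
    ∀ x : M, ∃ U : Set M, IsOpen U ∧ x ∈ U ∧ Nonempty (U ≃ₜ (Fin n → ℝ))

/-- `X` is finitely dominated: there is a homotopy `H : X × [0,1] → X` starting at the identity
whose time-one image has compact closure. -/
def FinitelyDominated (X : Type) [TopologicalSpace X] : Prop :=
  ∃ H : C(X × I, X), (∀ x, H (x, 0) = x) ∧
    IsCompact (closure (Set.range fun x => H (x, 1)))

/-- `X` has the homotopy type of a finite complex: it is homotopy equivalent to a compact
polyhedron, i.e. a finite union of simplices (convex hulls of finite sets) in some `ℝᴺ`. -/
def FiniteHomotopyType (X : Type) [TopologicalSpace X] : Prop :=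
  ∃ (N : ℕ) (S : Finset (Finset (Fin N → ℝ))),
    Nonempty (ContinuousMap.HomotopyEquiv X
      (⋃ s ∈ S, convexHull ℝ (s : Set (Fin N → ℝ)) : Set (Fin N → ℝ)))

/-- `N` is a clean neighborhood of infinity in `X`: `N` is closed, the closure of its complement
is compact, and its topological frontier is bicollared in `X`. -/
def IsCleanNbhdOfInf {X : Type} [TopologicalSpace X] (N : Set X) : Prop :=
  IsClosed N ∧ IsCompact (closure Nᶜ) ∧
    ∃ (U : Set X) (e : (frontier N × Set.Ioo (-1 : ℝ) 1) ≃ₜ U),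
      IsOpen U ∧ frontier N ⊆ U ∧
      (∀ x : frontier N, (e (x, ⟨0, by norm_num⟩) : X) = (x : X)) ∧
      ((fun z => ((e z : X))) '' {z : frontier N × Set.Ioo (-1 : ℝ) 1 | 0 ≤ (z.2 : ℝ)}
        = U ∩ N)

/-- `X` is one-ended: it is noncompact and every compact set is contained in a compact set
with connected complement. -/
def OneEnded (X : Type) [TopologicalSpace X] : Prop :=
  ¬ CompactSpace X ∧ ∀ K : Set X, IsCompact K →
    ∃ K' : Set X, IsCompact K' ∧ K ⊆ K' ∧ IsConnected K'ᶜ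

/-- The neighborhood of infinity `W(N,m) = (N × ℝ) ∪ (M × ((−∞,−m] ∪ [m,∞)))` in `M × ℝ`. -/
def WSet {M : Type} (N : Set M) (m : ℝ) : Set (M × ℝ) :=
  (N ×ˢ Set.univ) ∪ (Set.univ ×ˢ (Set.Iic (-m) ∪ Set.Ici m))

/-- The subset `W⁺(N,m) = (N × ℝ) ∪ (M × [m,∞))` of `M × ℝ`. -/
def WPlusSet {M : Type} (N : Set M) (m : ℝ) : Set (M × ℝ) :=
  (N ×ˢ Set.univ) ∪ (Set.univ ×ˢ Set.Ici m)

/-- If `Q ⊆ P` and `m ≤ m'` then `W(Q,m') ⊆ W(P,m)`. -/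
theorem WSet_mono {M : Type} {P Q : Set M} (h : Q ⊆ P) {m m' : ℝ} (hm : m ≤ m') :
    WSet Q m' ⊆ WSet P m := by
  rintro ⟨x, t⟩ (⟨hx, -⟩ | ⟨-, ht⟩)
  · exact Or.inl ⟨h hx, Set.mem_univ _⟩
  · refine Or.inr ⟨Set.mem_univ _, ?_⟩
    rcases ht with ht | ht
    · simp only [Set.mem_Iic] at ht ⊢
      exact Or.inl (Set.mem_Iic.mpr (by linarith))
    · simp only [Set.mem_Ici] at ht ⊢
      exact Or.inr (Set.mem_Ici.mpr (by linarith))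

/-- The inclusion between subspaces, as a continuous map. -/
def inclCM {X : Type} [TopologicalSpace X] {S T : Set X} (h : S ⊆ T) : C(S, T) :=
  ⟨Set.inclusion h, continuous_inclusion h⟩

/-- The inclusion of a subspace into the ambient space, as a continuous map. -/
def valCM {X : Type} [TopologicalSpace X] (S : Set X) : C(S, X) :=
  ⟨Subtype.val, continuous_subtype_val⟩

/-- The homomorphism of fundamental groups induced by a continuous map. -/
def indHom {X Y : Type} [TopologicalSpace X] [TopologicalSpace Y]
    (f : C(X, Y)) (x : X) : Aut (FundamentalGroupoid.mk x : FundamentalGroupoid X) →*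
      Aut (FundamentalGroupoid.mk (f x) : FundamentalGroupoid Y) :=
  CategoryTheory.Functor.mapAut _
    (FundamentalGroupoid.fundamentalGroupoidFunctor.map (X := TopCat.of X) (Y := TopCat.of Y) (TopCat.ofHom f))

/-- The change-of-basepoint isomorphism `π₁(X,q) ≃* π₁(X,p)` determined by a path `α` from `p`
to `q`; it sends the class of a loop `τ` to the class of `α ∗ τ ∗ α⁻¹`. -/
def basepointChange {X : Type} [TopologicalSpace X] {p q : X} (α : Path p q) :
    FundamentalGroup X q ≃* FundamentalGroup X p :=
  (FundamentalGroup.fundamentalGroupMulEquivOfPath α).symm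

/-- The path `α × {0}` in a subset `S` of `M × ℝ` determined by a path `α` in `M`. -/
def pathZeroIn {M : Type} [TopologicalSpace M] {p q : M} (α : Path p q)
    {S : Set (M × ℝ)} (h : ∀ t : I, ((α t : M), (0 : ℝ)) ∈ S) :
    Path (⟨(p, 0), by simpa using h 0⟩ : S) (⟨(q, 0), by simpa using h 1⟩ : S) where
  toFun t := ⟨(α t, 0), h t⟩
  continuous_toFun := ((α.continuous.prodMk continuous_const)).subtype_mk _
  source' := Subtype.ext (by simp)
  target' := Subtype.ext (by simp)


theorem spine_finitely_dominated (n : ℕ) (M : Type) [TopologicalSpace M]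
    (hM : IsOpenNManifold n M) (hMconn : ConnectedSpace M)
    (N : Set M) (hN : IsCleanNbhdOfInf N) (m : ℝ) (hm : 0 < m)
    (hdom : FinitelyDominated M) :
    FinitelyDominated ↥((Set.univ ×ˢ ({m} : Set ℝ)) ∪
        (frontier ((interior N)ᶜ) ×ˢ Set.Icc (-m) m) ∪
        (((interior N)ᶜ : Set M) ×ˢ ({-m} : Set ℝ))) := by
  obtain ⟨hT2, _hSC, _hNC, hch⟩ := hM
  haveI : T2Space M := hT2
  haveI : WeaklyLocallyCompactSpace M := by
    constructor
    intro x
    obtain ⟨U, hUopen, hxU, ⟨e⟩⟩ := hch x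
    refine ⟨Subtype.val '' (e.symm '' Metric.closedBall (e ⟨x, hxU⟩) 1), ?_, ?_⟩
    · exact ((isCompact_closedBall _ _).image e.symm.continuous).image continuous_subtype_val
    · refine mem_nhds_iff.mpr ⟨Subtype.val '' (e.symm '' Metric.ball (e ⟨x, hxU⟩) 1),
        Set.image_mono (Set.image_mono Metric.ball_subset_closedBall), ?_, ?_⟩
      · exact hUopen.isOpenMap_subtype_val _ (e.symm.isOpenMap _ Metric.isOpen_ball)
      · exact ⟨⟨x, hxU⟩, ⟨e ⟨x, hxU⟩, Metric.mem_ball_self one_pos, e.symm_apply_apply _⟩, rfl⟩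
  obtain ⟨hNcl, hNcpt, -⟩ := hN
  set C : Set M := (interior N)ᶜ with hC
  have hCclosed : IsClosed C := isOpen_interior.isClosed_compl
  have hCcpt : IsCompact C := by rw [hC, ← closure_compl]; exact hNcpt
  obtain ⟨H, hH0, hH1⟩ := hdom
  obtain ⟨L, hLcpt, hCL⟩ := exists_compact_superset hCcpt
  obtain ⟨d, hd0, hd1, hd01⟩ := exists_continuous_zero_one_of_isCompact hCcpt
    isOpen_interior.isClosed_compl
    (Set.disjoint_left.mpr fun x hx hx' => hx' (hCL hx))
  set Kb : Set (M × ℝ) := (Set.univ ×ˢ ({m} : Set ℝ)) ∪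
      (frontier C ×ˢ Set.Icc (-m) m) ∪ (C ×ˢ ({-m} : Set ℝ)) with hKb
  have h2m : (0:ℝ) < 2 * m := by linarith
  have hIcc : ∀ z : Kb, (z.val.2) ∈ Set.Icc (-m) m := by
    rintro ⟨⟨x, t⟩, hz⟩
    show t ∈ Set.Icc (-m) m
    rcases hz with (⟨-, ht⟩ | ⟨-, ht⟩) | ⟨-, ht⟩
    · have h : t = m := ht
      exact ⟨by linarith, by linarith⟩
    · exact ht
    · have h : t = -m := ht
      exact ⟨by linarith, by linarith⟩
  have hsgmem : ∀ (z : Kb) (s : I),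
      (s : ℝ) * d z.val.1 * ((z.val.2 + m) / (2 * m)) ∈ I := by
    intro z s
    obtain ⟨ht1, ht2⟩ := hIcc z
    obtain ⟨hdx1, hdx2⟩ := hd01 z.val.1
    have hχ1 : (0:ℝ) ≤ (z.val.2 + m) / (2 * m) := div_nonneg (by linarith) (by linarith)
    have hχ2 : (z.val.2 + m) / (2 * m) ≤ 1 := (div_le_one h2m).mpr (by linarith)
    constructor
    · exact mul_nonneg (mul_nonneg s.2.1 hdx1) hχ1
    · nlinarith [s.2.1, s.2.2, mul_nonneg s.2.1 hdx1]
  set sg : Kb × I → I := fun p =>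
    ⟨(p.2 : ℝ) * d p.1.val.1 * ((p.1.val.2 + m) / (2 * m)), hsgmem p.1 p.2⟩ with hsg
  have hsgcont : Continuous sg := by
    apply Continuous.subtype_mk
    exact ((continuous_subtype_val.comp continuous_snd).mul
        (d.continuous.comp (continuous_fst.comp (continuous_subtype_val.comp continuous_fst)))).mul
      (((continuous_snd.comp (continuous_subtype_val.comp continuous_fst)).add
        continuous_const).div_const _)
  have hmap : ∀ p : Kb × I, ((H (p.1.val.1, sg p), p.1.val.2)) ∈ Kb := by
    intro p
    rcases p.1.property with (⟨-, ht⟩ | ⟨hx, -⟩) | ⟨-, ht⟩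
    · exact Or.inl (Or.inl ⟨Set.mem_univ _, ht⟩)
    · have hdx : d p.1.val.1 = 0 := hd0 (hCclosed.frontier_subset hx)
      have hsg0 : sg p = 0 := Subtype.ext (by simp [hsg, hdx])
      rw [hsg0, hH0]
      exact Prod.mk.eta ▸ p.1.property
    · have ht' : p.1.val.2 = -m := ht
      have hsg0 : sg p = 0 := Subtype.ext (by simp [hsg, ht'])
      rw [hsg0, hH0]
      exact Prod.mk.eta ▸ p.1.property
  refine ⟨⟨fun p => ⟨(H (p.1.val.1, sg p), p.1.val.2), hmap p⟩, ?_⟩, ?_, ?_⟩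
  · apply Continuous.subtype_mk
    refine Continuous.prodMk ?_
      (continuous_snd.comp (continuous_subtype_val.comp continuous_fst))
    exact H.continuous.comp
      ((continuous_fst.comp (continuous_subtype_val.comp continuous_fst)).prodMk hsgcont)
  · intro z
    apply Subtype.ext
    have hsg0 : sg (z, 0) = 0 := Subtype.ext (by simp [hsg])
    show (H (z.val.1, sg (z, 0)), z.val.2) = z.val
    rw [hsg0, hH0]
  · simp only [ContinuousMap.coe_mk]
    set A : Set M := (H '' (L ×ˢ (Set.univ : Set I)) ∪ H '' (C ×ˢ (Set.univ : Set I))) ∪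
        closure (Set.range fun x => H (x, 1)) with hA
    have hAcpt : IsCompact A :=
      (((hLcpt.prod isCompact_univ).image H.continuous).union
        ((hCcpt.prod isCompact_univ).image H.continuous)).union hH1
    have hKbclosed : IsClosed Kb :=
      ((isClosed_univ.prod isClosed_singleton).union
        (isClosed_frontier.prod isClosed_Icc)).union (hCclosed.prod isClosed_singleton)
    have hScpt : IsCompact (Subtype.val ⁻¹' (A ×ˢ Set.Icc (-m) m) : Set Kb) := by
      rw [Topology.IsEmbedding.subtypeVal.isCompact_iff, Subtype.image_preimage_coe]
      exact (hAcpt.prod isCompact_Icc).inter_left hKbclosed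
    have hsub : Set.range (fun z : Kb =>
        (⟨(H (z.val.1, sg (z, 1)), z.val.2), hmap (z, 1)⟩ : Kb)) ⊆
        Subtype.val ⁻¹' (A ×ˢ Set.Icc (-m) m) := by
      rintro _ ⟨z, rfl⟩
      refine ⟨?_, hIcc z⟩
      show H (z.val.1, sg (z, 1)) ∈ A
      rcases z.property with (⟨-, ht⟩ | ⟨hx, -⟩) | ⟨hx, -⟩
      · by_cases hxL : z.val.1 ∈ L
        · exact Or.inl (Or.inl ⟨(z.val.1, sg (z, 1)), ⟨hxL, Set.mem_univ _⟩, rfl⟩)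
        · have hd1x : d z.val.1 = 1 := hd1 fun hmem => hxL (interior_subset hmem)
          have ht' : z.val.2 = m := ht
          have hsg1 : sg (z, 1) = 1 := by
            apply Subtype.ext
            show (1 : ℝ) * d z.val.1 * ((z.val.2 + m) / (2 * m)) = 1
            rw [hd1x, ht', show m + m = 2 * m by ring, div_self h2m.ne']
            ring
          rw [hsg1]
          exact Or.inr (subset_closure ⟨z.val.1, rfl⟩)
      · exact Or.inl (Or.inr ⟨(z.val.1, sg (z, 1)),
          ⟨hCclosed.frontier_subset hx, Set.mem_univ _⟩, rfl⟩)
      · exact Or.inl (Or.inr ⟨(z.val.1, sg (z, 1)), ⟨hx, Set.mem_univ _⟩, rfl⟩)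
    exact hScpt.of_isClosed_subset isClosed_closure
      (closure_minimal hsub hScpt.isClosed)

end
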